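/- (Discrete-time RAGE theorem, pure point part.) Let U be a unitary operator on ℓ²(ℤ,ℂ) and let ψ ∈ ℓ²(ℤ,ℂ) belong to the closed linear span of the eigenvectors of U (i.e. the spectral measure of ψ is pure point). Then for every ε > 0 there exists J ∈ ℕ such that limsup_{n→∞} Σ_{|j| ≥ J} |⟨δ_j, Uⁿψ⟩|² < ε. -/

import Mathlib

/-!
If `q` is a seminorm bounded by the norm and `U` is an isometry, then `x ↦ ⨆ n, q (Uⁿ x)` is
again such a seminorm, so for a family `q_J` of them the vectors with `⨆ n, q_J (Uⁿ x) → 0`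
form a closed subspace. It contains every eigenvector `x`: the eigenvalue has modulus one, so
`q_J (Uⁿ x) = q_J x`, and this tends to zero for the ℓ² tail seminorms
`q_J f = (∑_{|j| ≥ J} |f j|²)^{1/2}`. Hence it contains the closed span of the eigenvectors, and
for `ψ` there the tails of the whole orbit `Uⁿψ` are small uniformly in `n`.
-/

noncomputable section
open scoped ENNReal
open MeasureTheory

/-- The Hilbert space ℓ²(ℤ, ℂ). -/
abbrev l2Z := lp (fun _ : ℤ => ℂ) 2

/-- The standard orthonormal basis vector δ_j of ℓ²(ℤ, ℂ). -/
def delta (j : ℤ) : l2Z := lp.single 2 j (1 : ℂ)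

open Filter Topology

theorem LinearIsometryEquiv.pow_apply_of_apply_eq_smul {R E : Type*} [Semiring R]
    [SeminormedAddCommGroup E] [Module R E] {U : E ≃ₗᵢ[R] E} {x : E} {z : R}
    (hx : U x = z • x) (n : ℕ) : (U ^ n) x = z ^ n • x := by
  induction n with
  | zero => simp
  | succ n ih => rw [pow_succ', LinearIsometryEquiv.coe_mul, Function.comp_apply, ih, map_smul, hx,
      smul_smul, ← pow_succ]

namespace Seminorm

variable {𝕜 E ι : Type*} [NormedField 𝕜] [SeminormedAddCommGroup E] [NormedSpace 𝕜 E]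

def vanishingSubmodule (q : ι → Seminorm 𝕜 E) (l : Filter ι) : Submodule 𝕜 E where
  carrier := {x | Tendsto (fun i => q i x) l (𝓝 0)}
  zero_mem' := by simpa using tendsto_const_nhds
  add_mem' {x y} hx hy := squeeze_zero (fun i => apply_nonneg _ _)
    (fun i => map_add_le_add (q i) x y) (by simpa using hx.add hy)
  smul_mem' c x hx := by simpa [map_smul_eq_mul] using hx.const_mul ‖c‖

theorem isClosed_vanishingSubmodule {q : ι → Seminorm 𝕜 E} (hq : ∀ i x, q i x ≤ ‖x‖)
    (l : Filter ι) : IsClosed (vanishingSubmodule q l : Set E) := by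
  refine isClosed_of_closure_subset fun x hx => Metric.tendsto_nhds.2 fun ε hε => ?_
  obtain ⟨y, hy, hxy⟩ := Metric.mem_closure_iff.1 hx (ε / 2) (half_pos hε)
  filter_upwards [Metric.tendsto_nhds.1 hy (ε / 2) (half_pos hε)] with i hi
  rw [Real.dist_0_eq_abs, abs_of_nonneg (apply_nonneg _ _)] at hi ⊢
  calc q i x ≤ q i y + q i (x - y) := by
        linarith [le_abs_self (q i x - q i y), abs_sub_map_le_sub (q i) x y]
    _ ≤ q i y + ‖x - y‖ := by gcongr; exact hq i _
    _ < ε / 2 + ε / 2 := by gcongr; rwa [← dist_eq_norm]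
    _ = ε := add_halves ε

variable (q : Seminorm 𝕜 E) (U : E ≃ₗᵢ[𝕜] E)

/-- The supremum of seminorms is a junk value (`⊥`) unless the family is bounded above, which is
why the lemmas below assume `q ≤ ‖·‖`. -/
def orbitSup : Seminorm 𝕜 E := ⨆ n : ℕ, q.comp ((U ^ n).toLinearEquiv : E →ₗ[𝕜] E)

variable {q}

theorem bddAbove_range_apply_pow (hq : ∀ x, q x ≤ ‖x‖) (x : E) :
    BddAbove (Set.range fun n : ℕ => q ((U ^ n) x)) :=
  ⟨‖x‖, Set.forall_mem_range.2 fun n => (hq _).trans_eq ((U ^ n).norm_map x)⟩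

theorem orbitSup_apply (hq : ∀ x, q x ≤ ‖x‖) (x : E) :
    q.orbitSup U x = ⨆ n : ℕ, q ((U ^ n) x) := by
  rw [orbitSup, Seminorm.iSup_apply (Seminorm.bddAbove_range_iff.2 (bddAbove_range_apply_pow U hq))]
  rfl

theorem apply_pow_le_orbitSup (hq : ∀ x, q x ≤ ‖x‖) (x : E) (n : ℕ) :
    q ((U ^ n) x) ≤ q.orbitSup U x := by
  rw [orbitSup_apply U hq]
  exact le_ciSup (bddAbove_range_apply_pow U hq x) n

theorem orbitSup_le_norm (hq : ∀ x, q x ≤ ‖x‖) (x : E) : q.orbitSup U x ≤ ‖x‖ := by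
  rw [orbitSup_apply U hq]
  exact ciSup_le fun n => (hq _).trans_eq ((U ^ n).norm_map x)

theorem orbitSup_le_of_apply_eq_smul (hq : ∀ x, q x ≤ ‖x‖) {x : E} {z : 𝕜}
    (hx : U x = z • x) : q.orbitSup U x ≤ q x := by
  rcases eq_or_ne ‖x‖ 0 with h0 | h0
  · exact (orbitSup_le_norm U hq x).trans (h0.trans_le (apply_nonneg q x))
  have hz : ‖z‖ = 1 := by
    rw [← mul_eq_right₀ h0, ← norm_smul, ← hx, U.norm_map]
  rw [orbitSup_apply U hq]
  exact ciSup_le fun n => by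
    rw [U.pow_apply_of_apply_eq_smul hx, map_smul_eq_mul, norm_pow, hz, one_pow, one_mul]

theorem tendsto_orbitSup_zero_of_mem_closure_span_eigenvectors {q : ι → Seminorm 𝕜 E}
    {l : Filter ι} (hq : ∀ i x, q i x ≤ ‖x‖) (hq_tendsto : ∀ x, Tendsto (fun i => q i x) l (𝓝 0))
    {ψ : E} (hψ : ψ ∈ closure (Submodule.span 𝕜 {φ | ∃ z : 𝕜, U φ = z • φ} : Set E)) :
    Tendsto (fun i => (q i).orbitSup U ψ) l (𝓝 0) := by
  have hspan : Submodule.span 𝕜 {φ | ∃ z : 𝕜, U φ = z • φ} ≤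
      vanishingSubmodule (fun i => (q i).orbitSup U) l :=
    Submodule.span_le.2 fun φ ⟨_, hφ⟩ => squeeze_zero (fun _ => apply_nonneg _ _)
      (fun i => orbitSup_le_of_apply_eq_smul U (hq i) hφ) (hq_tendsto φ)
  exact closure_minimal hspan
    (isClosed_vanishingSubmodule (fun i => orbitSup_le_norm U (hq i)) l) hψ

end Seminorm

namespace lp

variable (𝕜 : Type*) {ι E : Type*} [NormedField 𝕜] [NormedAddCommGroup E] [NormedSpace 𝕜 E]
  {p : ℝ≥0∞}

def indicator (s : Set ι) : lp (fun _ : ι => E) p →ₗ[𝕜] lp (fun _ : ι => E) p where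
  toFun f := ⟨s.indicator (f : ι → E), (lp.memℓp f).mono' (norm_indicator_le_norm_self f)⟩
  map_add' _ _ := lp.ext (Set.indicator_add' s _ _)
  map_smul' c _ := lp.ext (Set.indicator_const_smul s c _)

theorem indicator_apply (s : Set ι) (f : lp (fun _ : ι => E) p) (i : ι) :
    indicator 𝕜 s f i = s.indicator (f : ι → E) i := rfl

def indicatorSeminorm [Fact (1 ≤ p)] (s : Set ι) : Seminorm 𝕜 (lp (fun _ : ι => E) p) :=
  (normSeminorm 𝕜 (lp (fun _ : ι => E) p)).comp (indicator 𝕜 s)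

variable {𝕜}

theorem indicatorSeminorm_le_norm [Fact (1 ≤ p)] (s : Set ι) (f : lp (fun _ : ι => E) p) :
    indicatorSeminorm 𝕜 s f ≤ ‖f‖ :=
  lp.norm_mono (zero_lt_one.trans_le Fact.out).ne' (norm_indicator_le_norm_self (f : ι → E))

theorem hasSum_norm_sq (f : lp (fun _ : ι => E) 2) : HasSum (fun i => ‖f i‖ ^ 2) (‖f‖ ^ 2) := by
  simpa using lp.hasSum_norm (p := 2) (by norm_num) f

theorem indicatorSeminorm_sq (s : Set ι) (f : lp (fun _ : ι => E) 2) :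
    indicatorSeminorm 𝕜 s f ^ 2 = ∑' i : s, ‖f i‖ ^ 2 := by
  rw [tsum_subtype s fun i => ‖f i‖ ^ 2]
  refine (hasSum_norm_sq (indicator 𝕜 s f)).tsum_eq.symm.trans (tsum_congr fun i => ?_)
  by_cases hi : i ∈ s <;> simp [hi, indicator_apply]

theorem tendsto_indicatorSeminorm_zero {κ : Type*} {s : κ → Set ι} {l : Filter κ}
    (hs : ∀ i, ∀ᶠ k in l, i ∉ s k) (f : lp (fun _ : ι => E) 2) :
    Tendsto (fun k => indicatorSeminorm 𝕜 (s k) f) l (𝓝 0) := by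
  have hsum := (hasSum_norm_sq f).summable
  refine tendsto_order.2 ⟨fun a ha => .of_forall fun k => ha.trans_le (apply_nonneg _ _),
    fun ε hε => ?_⟩
  -- the mass outside some finite `t` is below `ε²`, and eventually `s k` misses `t`
  obtain ⟨t, ht⟩ := ((tendsto_order.1 (tendsto_tsum_compl_atTop_zero fun i => ‖f i‖ ^ 2)).2
    (ε ^ 2) (by positivity)).exists
  filter_upwards [t.eventually_all.2 fun i _ => hs i] with k hk
  rw [← pow_lt_pow_iff_left₀ (apply_nonneg _ _) hε.le two_ne_zero, indicatorSeminorm_sq,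
    tsum_subtype (s k) fun i => ‖f i‖ ^ 2]
  refine lt_of_le_of_lt (le_of_le_of_eq ?_
    (tsum_subtype ((t : Set ι)ᶜ) fun i => ‖f i‖ ^ 2).symm) ht
  exact (hsum.indicator _).tsum_le_tsum
    (Set.indicator_le_indicator_of_subset (fun i hi hit => hk i hit hi) fun _ => by positivity)
    (hsum.indicator _)

end lp

def tailSeminorm (J : ℕ) : Seminorm ℂ l2Z := lp.indicatorSeminorm ℂ {j : ℤ | (J : ℤ) ≤ |j|}

theorem tailSeminorm_le_norm (J : ℕ) (f : l2Z) : tailSeminorm J f ≤ ‖f‖ :=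
  lp.indicatorSeminorm_le_norm _ f

theorem tendsto_tailSeminorm_zero (f : l2Z) : Tendsto (fun J => tailSeminorm J f) atTop (𝓝 0) :=
  lp.tendsto_indicatorSeminorm_zero (fun j => (eventually_gt_atTop j.natAbs).mono
    fun J hJ hj => by rw [Set.mem_ofPred_eq, Int.abs_eq_natAbs] at hj; omega) f

theorem inner_delta (j : ℤ) (f : l2Z) : inner ℂ (delta j) f = f j := by
  simp [delta, lp.inner_single_left]

theorem tsum_norm_inner_delta_sq (J : ℕ) (f : l2Z) :
    ∑' j : {j : ℤ // (J : ℤ) ≤ |j|}, ‖(inner ℂ (delta (j : ℤ)) f : ℂ)‖ ^ 2 =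
      tailSeminorm J f ^ 2 := by
  simp_rw [inner_delta]
  exact (lp.indicatorSeminorm_sq _ f).symm

/-- discrete-time RAGE theorem, pure point part. If ψ lies in the
closed span of the eigenvectors of a unitary U, then for every ε > 0 there is a J with
limsup_{n→∞} Σ_{|j| ≥ J} |⟨δ_j, Uⁿψ⟩|² < ε. -/
theorem rage_pure_point
    (U : l2Z ≃ₗᵢ[ℂ] l2Z) (ψ : l2Z)
    (hψ : ψ ∈ closure
      (Submodule.span ℂ {φ : l2Z | φ ≠ 0 ∧ ∃ z : ℂ, U φ = z • φ} : Set l2Z)) :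
    ∀ ε : ℝ, 0 < ε → ∃ J : ℕ,
      Filter.limsup
        (fun n : ℕ => ∑' j : {j : ℤ // (J : ℤ) ≤ |j|},
          ‖(inner ℂ (delta (j : ℤ)) ((U ^ n) ψ) : ℂ)‖ ^ 2)
        Filter.atTop < ε := by
  intro ε hε
  have hψ' : ψ ∈ closure (Submodule.span ℂ {φ | ∃ z : ℂ, U φ = z • φ} : Set l2Z) :=
    closure_mono (Submodule.span_mono fun φ hφ => hφ.2) hψ
  have hdecay := Seminorm.tendsto_orbitSup_zero_of_mem_closure_span_eigenvectors U
    tailSeminorm_le_norm tendsto_tailSeminorm_zero hψ'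
  obtain ⟨J, hJ⟩ := ((hdecay.pow 2).eventually (gt_mem_nhds (by simpa using hε))).exists
  refine ⟨J, (limsup_le_of_le (isCoboundedUnder_le_of_le atTop fun n => by positivity)
    (.of_forall fun n => ?_)).trans_lt hJ⟩
  rw [tsum_norm_inner_delta_sq]
  exact pow_le_pow_left₀ (apply_nonneg _ _)
    (Seminorm.apply_pow_le_orbitSup U (tailSeminorm_le_norm J) ψ n) 2
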